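/- Let X and Y be real normed spaces, f : X → Y, and let P_1, …, P_m be polyhedra in X, T_1, …, T_m : X → Y continuous linear operators and b_1, …, b_m ∈ Y such that X = ⋃_{i=1}^m P_i, int(P_i) ≠ ∅ for every i, P_i ∩ int(P_j) = ∅ for all i ≠ j, and f(x) = T_i x + b_i for all x ∈ P_i and each i. Let X_1 and X_2 be closed linear subspaces of X such that X_1 ⊆ ⋂_{i=1}^m lin(P_i), X_1 ∩ X_2 = {0}, X_1 + X_2 = X, and X_2 is finite-dimensional. Then there exist a continuous linear operator T : X_1 → Y, a finite-dimensional linear subspace Ŷ of Y, and a piecewise linear function g : X_2 → Ŷ (i.e. X_2 is covered by finitely many polyhedra of X_2 on each of which g is affine with continuous linear part) such that f(x_1 + x_2) = T x_1 + g(x_2) for all (x_1, x_2) ∈ X_1 × X_2. -/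

import Mathlib

/-!
A translation `h ∈ X₁` preserves every piece `P i`, so on `P i` the increment `f (x + h) - f x`
is the constant `T i h`. As the pieces are finitely many and closed, the increment is locally
constant on the connected space `X`, hence equal to `T i₀ h` for one fixed `i₀`. Writing
`x = x₁ + x₂` gives `f x = T i₀ x₁ + f x₂`, and `f` on `X₂` is piecewise affine with values in the
finite-dimensional span of the spaces `T i (X₂)` and the vectors `b i`.
-/

open Set

/-- A polyhedron in a real normed space: a finite intersection of closed half-spaces. -/
def IsPolyhedron {Z : Type*} [NormedAddCommGroup Z] [NormedSpace ℝ Z] (P : Set Z) : Prop :=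
  ∃ (n : ℕ) (u : Fin n → Z →L[ℝ] ℝ) (s : Fin n → ℝ), P = {z | ∀ i, u i z ≤ s i}

/-- `f` is piecewise linear: finitely many polyhedra cover the domain and on each of
them `f` is affine with continuous linear part. -/
def IsPLMap {X Y : Type*} [NormedAddCommGroup X] [NormedSpace ℝ X]
    [NormedAddCommGroup Y] [NormedSpace ℝ Y] (f : X → Y) : Prop :=
  ∃ (k : ℕ) (Q : Fin k → Set X) (S : Fin k → X →L[ℝ] Y) (c : Fin k → Y),
    (∀ j, IsPolyhedron (Q j)) ∧ (⋃ j, Q j) = Set.univ ∧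
    ∀ j, ∀ x ∈ Q j, f x = S j x + c j

section

variable {X Y : Type*} [NormedAddCommGroup X] [NormedSpace ℝ X]
  [NormedAddCommGroup Y] [NormedSpace ℝ Y]

theorem IsPolyhedron.isClosed {P : Set X} (hP : IsPolyhedron P) : IsClosed P := by
  obtain ⟨n, u, s, rfl⟩ := hP
  simpa only [ofPred_forall] using
    isClosed_iInter fun i => isClosed_le (u i).continuous continuous_const

theorem IsPolyhedron.preimage {Z : Type*} [NormedAddCommGroup Z] [NormedSpace ℝ Z]
    {P : Set X} (hP : IsPolyhedron P) (L : Z →L[ℝ] X) : IsPolyhedron (L ⁻¹' P) := by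
  obtain ⟨n, u, s, rfl⟩ := hP
  exact ⟨n, fun i => (u i).comp L, s, rfl⟩

theorem isLocallyConstant_of_finite_closed_cover {α β ι : Type*} [TopologicalSpace α] [Finite ι]
    {P : ι → Set α} (hP : ∀ i, IsClosed (P i)) (hcover : ⋃ i, P i = univ)
    {φ : α → β} {c : ι → β} (hφ : ∀ i, ∀ x ∈ P i, φ x = c i) : IsLocallyConstant φ := by
  refine IsLocallyConstant.iff_isOpen_fiber.2 fun y => ?_
  have hfiber : φ ⁻¹' {y} = (⋃ i ∈ {i | c i ≠ y}, P i)ᶜ := by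
    ext x
    obtain ⟨j, hj⟩ := mem_iUnion.1 (hcover.symm ▸ mem_univ x : x ∈ ⋃ i, P i)
    simp only [mem_preimage, mem_singleton_iff, mem_compl_iff, mem_iUnion₂, not_exists]
    constructor
    · rintro rfl i hne hx
      exact hne (hφ i x hx).symm
    · intro h
      rw [hφ j x hj]
      by_contra hne
      exact h j hne hj
  rw [hfiber]
  exact ((toFinite _).isClosed_biUnion fun i _ => hP i).isOpen_compl

theorem map_add_eq_of_piecewise_affine {ι : Type*} [Finite ι] {f : X → Y} {P : ι → Set X}
    {T : ι → X →L[ℝ] Y} {b : ι → Y} (hP : ∀ i, IsClosed (P i)) (hcover : ⋃ i, P i = univ)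
    (hf : ∀ i, ∀ x ∈ P i, f x = T i x + b i) {h : X} (hh : ∀ i, ∀ x ∈ P i, x + h ∈ P i)
    {i : ι} (hi : (P i).Nonempty) (x : X) : f (x + h) = f x + T i h := by
  have hincr : ∀ i, ∀ x ∈ P i, f (x + h) - f x = T i h := fun i x hx => by
    rw [hf i _ (hh i x hx), hf i x hx, map_add]
    abel
  obtain ⟨y, hy⟩ := hi
  rw [← sub_eq_iff_eq_add', ← hincr i y hy]
  exact (isLocallyConstant_of_finite_closed_cover hP hcover hincr).apply_eq_of_preconnectedSpace
    x y

def piecewiseAffineRange {ι : Type*} (V : Submodule ℝ X) (T : ι → X →L[ℝ] Y) (b : ι → Y) :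
    Submodule ℝ Y :=
  ⨆ i, V.map (T i : X →ₗ[ℝ] Y) ⊔ ℝ ∙ b i

section piecewiseAffineRange

variable {ι : Type*} (V : Submodule ℝ X) (T : ι → X →L[ℝ] Y) (b : ι → Y)

instance [Finite ι] [FiniteDimensional ℝ V] :
    FiniteDimensional ℝ (piecewiseAffineRange V T b) := by
  unfold piecewiseAffineRange
  infer_instance

theorem apply_mem_piecewiseAffineRange (i : ι) {v : X} (hv : v ∈ V) :
    T i v ∈ piecewiseAffineRange V T b :=
  Submodule.mem_iSup_of_mem i (Submodule.mem_sup_left (Submodule.mem_map_of_mem hv))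

theorem offset_mem_piecewiseAffineRange (i : ι) : b i ∈ piecewiseAffineRange V T b :=
  Submodule.mem_iSup_of_mem i (Submodule.mem_sup_right (Submodule.mem_span_singleton_self _))

theorem map_mem_piecewiseAffineRange {f : X → Y} {P : ι → Set X} (hcover : ⋃ i, P i = univ)
    (hf : ∀ i, ∀ x ∈ P i, f x = T i x + b i) {v : X} (hv : v ∈ V) :
    f v ∈ piecewiseAffineRange V T b := by
  obtain ⟨i, hi⟩ := mem_iUnion.1 (hcover.symm ▸ mem_univ v : v ∈ ⋃ i, P i)
  rw [hf i v hi]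
  exact add_mem (apply_mem_piecewiseAffineRange V T b i hv)
    (offset_mem_piecewiseAffineRange V T b i)

end piecewiseAffineRange

theorem isPLMap_restrict {m : ℕ} {f : X → Y} {P : Fin m → Set X} {T : Fin m → X →L[ℝ] Y}
    {b : Fin m → Y} (hpoly : ∀ i, IsPolyhedron (P i)) (hcover : ⋃ i, P i = univ)
    (hf : ∀ i, ∀ x ∈ P i, f x = T i x + b i) (V : Submodule ℝ X)
    (g : V → piecewiseAffineRange V T b) (hg : ∀ v, (g v : Y) = f v) : IsPLMap g := by
  refine ⟨m, fun i => V.subtypeL ⁻¹' P i,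
    fun i => ((T i).comp V.subtypeL).codRestrict _ fun v =>
      apply_mem_piecewiseAffineRange V T b i v.2,
    fun i => ⟨b i, offset_mem_piecewiseAffineRange V T b i⟩,
    fun i => (hpoly i).preimage _, ?_, fun i v hv => Subtype.ext ?_⟩
  · rw [← preimage_iUnion, hcover, preimage_univ]
  · rw [hg, hf i v hv]
    rfl

end

theorem stmt_14_general {X Y : Type*} [NormedAddCommGroup X] [NormedSpace ℝ X]
    [NormedAddCommGroup Y] [NormedSpace ℝ Y]
    (f : X → Y) {m : ℕ}
    (P : Fin m → Set X) (T : Fin m → X →L[ℝ] Y) (b : Fin m → Y)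
    (hpoly : ∀ i, IsPolyhedron (P i)) (hcover : (⋃ i, P i) = Set.univ)
    (hf : ∀ i, ∀ x ∈ P i, f x = T i x + b i)
    (X1 X2 : Submodule ℝ X)
    (hX1lin : (X1 : Set X) ⊆ ⋂ i, {h | ∀ x ∈ P i, ∀ t : ℝ, x + t • h ∈ P i})
    (hfin : FiniteDimensional ℝ X2) :
    ∃ (T0 : X1 →L[ℝ] Y) (Yhat : Submodule ℝ Y) (g : X2 → Yhat),
      FiniteDimensional ℝ Yhat ∧ IsPLMap g ∧
      ∀ (x1 : X1) (x2 : X2), f ((x1 : X) + (x2 : X)) = T0 x1 + (g x2 : Y) := by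
  obtain ⟨i0, hi0⟩ := mem_iUnion.1 (hcover.symm ▸ mem_univ 0 : (0 : X) ∈ ⋃ i, P i)
  refine ⟨(T i0).comp X1.subtypeL, piecewiseAffineRange X2 T b, fun x2 =>
    ⟨f x2, map_mem_piecewiseAffineRange X2 T b hcover hf x2.2⟩,
    inferInstance, isPLMap_restrict hpoly hcover hf X2 _ fun _ => rfl, fun x1 x2 => ?_⟩
  have htrans : ∀ i, ∀ x ∈ P i, x + x1 ∈ P i := fun i x hx => by
    simpa using mem_iInter.1 (hX1lin x1.2) i x hx 1
  rw [add_comm, map_add_eq_of_piecewise_affine (fun i => (hpoly i).isClosed) hcover hf htrans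
    ⟨0, hi0⟩, add_comm]
  rfl

/-- Decomposition of a piecewise linear function as the sum of a continuous
linear operator on an (infinite dimensional) closed subspace `X₁` and a piecewise linear
function on a finite dimensional complement `X₂` with values in a finite dimensional
subspace `Ŷ` of `Y`. -/
theorem stmt_14 {X Y : Type*} [NormedAddCommGroup X] [NormedSpace ℝ X]
    [NormedAddCommGroup Y] [NormedSpace ℝ Y]
    (f : X → Y) {m : ℕ}
    (P : Fin m → Set X) (T : Fin m → X →L[ℝ] Y) (b : Fin m → Y)
    (hpoly : ∀ i, IsPolyhedron (P i)) (hcover : (⋃ i, P i) = Set.univ)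
    (hint : ∀ i, (interior (P i)).Nonempty)
    (hdisj : ∀ i j, i ≠ j → P i ∩ interior (P j) = ∅)
    (hf : ∀ i, ∀ x ∈ P i, f x = T i x + b i)
    (X1 X2 : Submodule ℝ X)
    (hX1closed : IsClosed (X1 : Set X)) (hX2closed : IsClosed (X2 : Set X))
    (hX1lin : (X1 : Set X) ⊆ ⋂ i, {h | ∀ x ∈ P i, ∀ t : ℝ, x + t • h ∈ P i})
    (hinf : X1 ⊓ X2 = ⊥) (hsup : X1 ⊔ X2 = ⊤)
    (hfin : FiniteDimensional ℝ X2) :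
    ∃ (T0 : X1 →L[ℝ] Y) (Yhat : Submodule ℝ Y) (g : X2 → Yhat),
      FiniteDimensional ℝ Yhat ∧ IsPLMap g ∧
      ∀ (x1 : X1) (x2 : X2), f ((x1 : X) + (x2 : X)) = T0 x1 + (g x2 : Y) :=
  stmt_14_general f P T b hpoly hcover hf X1 X2 hX1lin hfin
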